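/- If α ∈ ℂ satisfies 5α^4 + 6α^2 + 5 = 0, then any point (z0,z1,z3) with z0 + z1 = 0 and z1^2 = -(3/2)(α^2+1) z3^2 is a singular point of the plane quartic F_α(z0,z1,z3) = z0^4 + z1^4 + (1+α^4) z3^4 - 6(α^2 z3^4 + (α^2+1)(z0^2+z1^2) z3^2 + z0^2 z1^2). -/

import Mathlib

noncomputable def Fq (t z0 z1 z3 : ℂ) : ℂ :=
  z0^4 + z1^4 + (1 + t^4) * z3^4
    - 6 * (t^2 * z3^4 + (t^2 + 1) * (z0^2 + z1^2) * z3^2 + z0^2 * z1^2)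

noncomputable def Fq0 (t z0 z1 z3 : ℂ) : ℂ :=
  4*z0^3 - 12*(t^2 + 1)*z0*z3^2 - 12*z0*z1^2

noncomputable def Fq1 (t z0 z1 z3 : ℂ) : ℂ :=
  4*z1^3 - 12*(t^2 + 1)*z1*z3^2 - 12*z1*z0^2

noncomputable def Fq3 (t z0 z1 z3 : ℂ) : ℂ :=
  4*(1 + t^4)*z3^3 - 24*t^2*z3^3 - 12*(t^2 + 1)*(z0^2 + z1^2)*z3

/-!
On the locus `z0^2 = z1^2`, `z1^2 = -(3/2)(α^2+1) z3^2` the partials `∂F/∂z0`, `∂F/∂z1` vanish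
identically in `α`, while `∂F/∂z3` reduces to `8 z3^3 (5α^4 + 6α^2 + 5)`. Since `F_α` is a
quartic form, Euler's identity `4 F = z0 ∂₀F + z1 ∂₁F + z3 ∂₃F` then gives `F = 0` as well.
-/

section Partials

variable (t z0 z1 z3 : ℂ)

theorem Fq_euler :
    4 * Fq t z0 z1 z3 = z0 * Fq0 t z0 z1 z3 + z1 * Fq1 t z0 z1 z3 + z3 * Fq3 t z0 z1 z3 := by
  unfold Fq Fq0 Fq1 Fq3
  ring

variable {t z0 z1 z3}

theorem Fq0_eq_zero_of_sq_eq (hsq : z0^2 = z1^2) (h : z1^2 = -(3/2)*(t^2 + 1)*z3^2) :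
    Fq0 t z0 z1 z3 = 0 := by
  unfold Fq0
  linear_combination 4*z0 * hsq - 8*z0 * h

theorem Fq1_eq_zero_of_sq_eq (hsq : z0^2 = z1^2) (h : z1^2 = -(3/2)*(t^2 + 1)*z3^2) :
    Fq1 t z0 z1 z3 = 0 := by
  unfold Fq1
  linear_combination -12*z1 * hsq - 8*z1 * h

theorem Fq3_eq_of_sq_eq (hsq : z0^2 = z1^2) (h : z1^2 = -(3/2)*(t^2 + 1)*z3^2) :
    Fq3 t z0 z1 z3 = 8*z3^3 * (5*t^4 + 6*t^2 + 5) := by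
  unfold Fq3
  linear_combination -12*(t^2 + 1)*z3 * hsq - 24*(t^2 + 1)*z3 * h

end Partials

/-- If `5α^4 + 6α^2 + 5 = 0`, `z0 + z1 = 0` and `z1^2 = -(3/2)(α^2+1) z3^2`, then
`(z0,z1,z3)` is a singular point of the plane quartic `F_α = 0`. -/
theorem singular_point_g22 (α z0 z1 z3 : ℂ) (hα : 5*α^4 + 6*α^2 + 5 = 0)
    (h0 : z0 + z1 = 0) (h1 : z1^2 = -(3/2)*(α^2 + 1)*z3^2) :
    Fq α z0 z1 z3 = 0 ∧ Fq0 α z0 z1 z3 = 0 ∧ Fq1 α z0 z1 z3 = 0 ∧ Fq3 α z0 z1 z3 = 0 := by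
  have hsq : z0^2 = z1^2 := by rw [eq_neg_of_add_eq_zero_left h0, neg_sq]
  have hF0 := Fq0_eq_zero_of_sq_eq hsq h1
  have hF1 := Fq1_eq_zero_of_sq_eq hsq h1
  have hF3 : Fq3 α z0 z1 z3 = 0 := by rw [Fq3_eq_of_sq_eq hsq h1, hα, mul_zero]
  have hF : 4 * Fq α z0 z1 z3 = 0 := by rw [Fq_euler, hF0, hF1, hF3]; ring
  exact ⟨by simpa using hF, hF0, hF1, hF3⟩
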